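/- Let m ≥ 1 and n ≥ 1. An element u of Hi_𝐦(n) is covered by exactly n−1 elements in the poset Hi_𝐦(n) if and only if u_1 ≤ u_2 < u_3 < ⋯ < u_n and u_i < m(i−1) for all i ∈ [2,n]. (These elements are the output-wings of Hi_𝐦(n); here n−1 = #{i ∈ [n] : 𝐦(i) ≠ 0}.) -/

import Mathlib

/-- Componentwise order on words of natural numbers of the same length. -/
def wle (u v : List ℕ) : Prop := List.Forall₂ (· ≤ ·) u v

/-- Strict componentwise order. -/
def wlt (u v : List ℕ) : Prop := wle u v ∧ u ≠ v

/-- `u` is a `δ`-cliff: the letter at (0-indexed) position `i` is at most `δ i`.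
(The range map is 0-indexed: `δ i` is the bound of the `(i+1)`-st letter.) -/
def IsCliff (δ : ℕ → ℕ) (u : List ℕ) : Prop := ∀ i < u.length, u.getD i 0 ≤ δ i

def ClosedByPrefix (S : Set (List ℕ)) : Prop := ∀ u v : List ℕ, u ++ v ∈ S → u ∈ S

def MinExtendable (S : Set (List ℕ)) : Prop := [] ∈ S ∧ ∀ u ∈ S, u ++ [0] ∈ S

def MaxExtendable (δ : ℕ → ℕ) (S : Set (List ℕ)) : Prop :=
  [] ∈ S ∧ ∀ u ∈ S, u ++ [δ u.length] ∈ S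

/-- `v` covers `u` in the subposet `S` (componentwise order on words of equal length). -/
def CoversIn (S : Set (List ℕ)) (u v : List ℕ) : Prop :=
  u ∈ S ∧ v ∈ S ∧ wlt u v ∧ ¬ ∃ w ∈ S, wlt u w ∧ wlt w v

/-- Auxiliary for the decrementation map: input is the reversed word. -/
noncomputable def decrAux (S : Set (List ℕ)) : List ℕ → List ℕ
  | [] => []
  | a :: r => decrAux S r ++ [sSup {b | b ≤ a ∧ decrAux S r ++ [b] ∈ S}]

/-- The `S`-decrementation map. -/
noncomputable def decr (S : Set (List ℕ)) (u : List ℕ) : List ℕ := decrAux S u.reverse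

/-- Auxiliary for the incrementation map: input is the reversed word. -/
noncomputable def incrAux (δ : ℕ → ℕ) (S : Set (List ℕ)) : List ℕ → List ℕ
  | [] => []
  | a :: r => incrAux δ S r ++
      [sInf {b | a ≤ b ∧ b ≤ δ r.length ∧ incrAux δ S r ++ [b] ∈ S}]

/-- The `S`-incrementation map. -/
noncomputable def incr (δ : ℕ → ℕ) (S : Set (List ℕ)) (u : List ℕ) : List ℕ :=
  incrAux δ S u.reverse

/-- The `S`-elevation map. -/
noncomputable def elev (S : Set (List ℕ)) (u : List ℕ) : List ℕ :=
  (List.range u.length).map fun i =>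
    Set.ncard {a : ℕ | a < u.getD i 0 ∧ u.take i ++ [a] ∈ S}

/-- A `δ`-hill: a weakly increasing `δ`-cliff. -/
def IsHill (δ : ℕ → ℕ) (u : List ℕ) : Prop :=
  IsCliff δ u ∧ List.Pairwise (· ≤ ·) u

/-- A `δ`-avalanche: a `δ`-cliff whose nonempty prefixes have small sums. -/
def IsAval (δ : ℕ → ℕ) (u : List ℕ) : Prop :=
  IsCliff δ u ∧ ∀ k < u.length, (u.take (k + 1)).sum ≤ δ k

/-- A `δ`-canyon. -/
def IsCanyon (δ : ℕ → ℕ) (u : List ℕ) : Prop :=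
  IsCliff δ u ∧ ∀ i < u.length, ∀ j, 1 ≤ j → j ≤ u.getD i 0 → j ≤ i →
    u.getD (i - j) 0 + j ≤ u.getD i 0

/-- The `δ`-reduction map. -/
def reduce (δ : ℕ → ℕ) (u : List ℕ) : List ℕ :=
  (List.range u.length).map fun i => min (u.getD i 0) (δ i)

/-- `δ` is valley-free. -/
def ValleyFree (δ : ℕ → ℕ) : Prop :=
  ¬ ∃ i₁ i₂ i₃ : ℕ, i₁ < i₂ ∧ i₂ < i₃ ∧ δ i₂ < δ i₁ ∧ δ i₂ < δ i₃

lemma ext_getD {u v : List ℕ} (hl : u.length = v.length)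
    (h : ∀ i < u.length, u.getD i 0 = v.getD i 0) : u = v := by
  apply List.ext_getElem hl
  intro i h1 h2
  have := h i h1
  rwa [List.getD_eq_getElem u 0 h1, List.getD_eq_getElem v 0 h2] at this

lemma wle_iff' {u v : List ℕ} :
    wle u v ↔ u.length = v.length ∧ ∀ i < u.length, u.getD i 0 ≤ v.getD i 0 := by
  rw [wle, List.forall₂_iff_get]
  constructor
  · rintro ⟨hl, h⟩
    refine ⟨hl, fun i hi => ?_⟩
    rw [List.getD_eq_getElem u 0 hi, List.getD_eq_getElem v 0 (hl ▸ hi)]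
    exact h i hi (hl ▸ hi)
  · rintro ⟨hl, h⟩
    refine ⟨hl, fun i h1 h2 => ?_⟩
    have := h i h1
    rwa [List.getD_eq_getElem u 0 h1, List.getD_eq_getElem v 0 h2] at this

lemma sorted_iff' {l : List ℕ} :
    List.Pairwise (· ≤ ·) l ↔ ∀ i, i + 1 < l.length → l.getD i 0 ≤ l.getD (i+1) 0 := by
  rw [← List.isChain_iff_pairwise, List.isChain_iff_getElem]
  constructor
  · intro h i hi
    rw [List.getD_eq_getElem _ 0 (show i < l.length by omega), List.getD_eq_getElem _ 0 hi]
    exact h i (by omega)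
  · intro h i hi
    have := h i (by omega)
    rwa [List.getD_eq_getElem _ 0 (show i < l.length by omega),
      List.getD_eq_getElem _ 0 (show i + 1 < l.length by omega)] at this

def inc (u : List ℕ) (i : ℕ) : List ℕ := u.set i (u.getD i 0 + 1)

lemma getD_inc {u : List ℕ} {i j : ℕ} (hj : j < u.length) :
    (inc u i).getD j 0 = if i = j then u.getD i 0 + 1 else u.getD j 0 := by
  have hj' : j < (inc u i).length := by simp [inc]; omega
  rw [List.getD_eq_getElem _ 0 hj']
  show (u.set i (u.getD i 0 + 1))[j]'(by simpa [inc] using hj') = _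
  rw [List.getElem_set]
  split
  · rfl
  · rw [List.getD_eq_getElem _ 0 hj]

lemma length_inc (u : List ℕ) (i : ℕ) : (inc u i).length = u.length := by simp [inc]

/-- Let `m ≥ 1`, `n ≥ 1`. An `𝐦`-hill `u` of size `n` is covered by
exactly `n - 1` elements in the poset `Hi_𝐦(n)` if and only if
`u₁ ≤ u₂ < u₃ < ⋯ < uₙ` and `u_i < m(i-1)` for all `i ∈ [2, n]`
(0-indexed: `u` is strictly increasing from position 1 on, and `u_i < m·i` for
`1 ≤ i < n`). Here `n - 1 = #{i ∈ [n] : 𝐦(i) ≠ 0}`. -/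
theorem stmt10 (m n : ℕ) (hm : 1 ≤ m) (hn : 1 ≤ n) (u : List ℕ)
    (hu : IsHill (fun i => m * i) u) (hlen : u.length = n) :
    Set.ncard {v | CoversIn {w | IsHill (fun i => m * i) w ∧ w.length = n} u v} = n - 1
    ↔ ((2 ≤ n → u.getD 0 0 ≤ u.getD 1 0) ∧
       (∀ i, 1 ≤ i → i + 1 < n → u.getD i 0 < u.getD (i + 1) 0) ∧
       (∀ i, 1 ≤ i → i < n → u.getD i 0 < m * i)) := by
  classical
  set S : Set (List ℕ) := {w | IsHill (fun i => m * i) w ∧ w.length = n} with hS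
  obtain ⟨hcliff, hsort⟩ := hu
  have hucliff : ∀ i < n, u.getD i 0 ≤ m * i := fun i hi => hcliff i (by omega)
  have husorted : ∀ i, i + 1 < n → u.getD i 0 ≤ u.getD (i+1) 0 := by
    intro i hi
    exact sorted_iff'.mp hsort i (by omega)
  have huS : u ∈ S := ⟨⟨hcliff, hsort⟩, hlen⟩
  -- membership of inc u i in S
  have hinc_mem : ∀ i < n, (inc u i ∈ S ↔
      (u.getD i 0 + 1 ≤ m * i ∧ (i + 1 < n → u.getD i 0 + 1 ≤ u.getD (i+1) 0))) := by
    intro i hin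
    have hiu : i < u.length := by omega
    have hli : (inc u i).length = n := by rw [length_inc]; exact hlen
    constructor
    · rintro ⟨⟨hc, hs⟩, _⟩
      constructor
      · have := hc i (by omega)
        rwa [getD_inc hiu, if_pos rfl] at this
      · intro h1
        have := sorted_iff'.mp hs i (by omega)
        rwa [getD_inc hiu, if_pos rfl, getD_inc (show i + 1 < u.length by omega),
          if_neg (by omega)] at this
    · rintro ⟨h1, h2⟩
      refine ⟨⟨?_, sorted_iff'.mpr ?_⟩, hli⟩
      · intro j hj
        rw [getD_inc (show j < u.length by omega)]
        split
        · next h => subst h; exact h1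
        · exact hucliff j (by omega)
      · intro j hj
        rw [hli] at hj
        rw [getD_inc (show j < u.length by omega),
          getD_inc (show j + 1 < u.length by omega)]
        by_cases hij : i = j
        · rw [if_pos hij, if_neg (by omega)]
          subst hij
          exact h2 hj
        · rw [if_neg hij]
          by_cases hij1 : i = j + 1
          · rw [if_pos hij1]
            subst hij1
            have := husorted j hj
            omega
          · rw [if_neg hij1]
            exact husorted j hj
  -- covers are exactly increments
  have hcov : ∀ v, CoversIn S u v ↔ ∃ i, (i < n ∧ inc u i ∈ S) ∧ v = inc u i := by
    intro v
    constructor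
    · rintro ⟨_, hvS, ⟨hle, hne⟩, hnomid⟩
      obtain ⟨hvl, hcoord⟩ := wle_iff'.mp hle
      have hvn : v.length = n := hvS.2
      have hex : ∃ j ∈ Finset.range n, u.getD j 0 < v.getD j 0 := by
        by_contra h
        push_neg at h
        exact hne (ext_getD hvl (fun j hj =>
          le_antisymm (hcoord j hj) (by have := h j (Finset.mem_range.mpr (by omega)); omega)))
      set F := (Finset.range n).filter (fun j => u.getD j 0 < v.getD j 0) with hF
      have hFne : F.Nonempty := by
        obtain ⟨j, hj1, hj2⟩ := hex
        exact ⟨j, Finset.mem_filter.mpr ⟨hj1, hj2⟩⟩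
      set i := F.max' hFne with hi
      have hiF : i ∈ F := F.max'_mem hFne
      have hin : i < n := Finset.mem_range.mp (Finset.mem_filter.mp hiF).1
      have hilt : u.getD i 0 < v.getD i 0 := (Finset.mem_filter.mp hiF).2
      have hmax : ∀ j, i < j → j < n → v.getD j 0 = u.getD j 0 := by
        intro j h1 h2
        by_contra hne2
        have hjlt : u.getD j 0 < v.getD j 0 :=
          lt_of_le_of_ne (hcoord j (by omega)) (Ne.symm hne2)
        have : j ∈ F := Finset.mem_filter.mpr ⟨Finset.mem_range.mpr h2, hjlt⟩
        have := F.le_max' j this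
        rw [← hi] at this
        omega
      have hwS : inc u i ∈ S := by
        rw [hinc_mem i hin]
        constructor
        · have hvc : v.getD i 0 ≤ m * i := hvS.1.1 i (by omega)
          omega
        · intro h
          have hvsorted := sorted_iff'.mp hvS.1.2 i (by omega)
          have := hmax (i+1) (by omega) h
          omega
      have hwle_uw : wle u (inc u i) := by
        rw [wle_iff']
        refine ⟨(length_inc u i).symm, fun j hj => ?_⟩
        rw [getD_inc hj]
        split
        · next h => subst h; omega
        · omega
      have hwle_wv : wle (inc u i) v := by
        rw [wle_iff']
        refine ⟨by rw [length_inc]; omega, fun j hj => ?_⟩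
        rw [length_inc] at hj
        rw [getD_inc hj]
        split
        · next h => subst h; omega
        · exact hcoord j hj
      by_cases hwv : inc u i = v
      · exact ⟨i, ⟨hin, hwS⟩, hwv.symm⟩
      · exfalso
        apply hnomid
        refine ⟨inc u i, hwS, ⟨hwle_uw, ?_⟩, hwle_wv, hwv⟩
        intro h
        have := congrArg (fun l => l.getD i 0) h
        rw [getD_inc (show i < u.length by omega), if_pos rfl] at this
        omega
    · rintro ⟨i, ⟨hin, hiS⟩, rfl⟩
      have hiu : i < u.length := by omega
      have hwle_uw : wle u (inc u i) := by
        rw [wle_iff']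
        refine ⟨(length_inc u i).symm, fun j hj => ?_⟩
        rw [getD_inc hj]
        split
        · next h => subst h; omega
        · omega
      have hne : u ≠ inc u i := by
        intro h
        have := congrArg (fun l => l.getD i 0) h
        rw [getD_inc hiu, if_pos rfl] at this
        omega
      refine ⟨huS, hiS, ⟨hwle_uw, hne⟩, ?_⟩
      rintro ⟨w, hwS, ⟨hle1, hne1⟩, hle2, hne2⟩
      obtain ⟨hl1, hc1⟩ := wle_iff'.mp hle1
      obtain ⟨hl2, hc2⟩ := wle_iff'.mp hle2
      have hwn : w.length = u.length := hl1.symm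
      have hpin : ∀ j < u.length, j ≠ i → w.getD j 0 = u.getD j 0 := by
        intro j hj hji
        have h1 := hc1 j hj
        have h2 := hc2 j (by omega)
        rw [getD_inc hj, if_neg (Ne.symm hji)] at h2
        omega
      have h1i := hc1 i hiu
      have h2i := hc2 i (by omega)
      rw [getD_inc hiu, if_pos rfl] at h2i
      by_cases hcase : w.getD i 0 = u.getD i 0
      · exact hne1 (ext_getD hl1.symm (fun j hj => by
          by_cases hji : j = i
          · subst hji; omega
          · exact hpin j (by omega) hji)).symm
      · apply hne2
        apply ext_getD (by rw [hwn, length_inc])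
        intro j hj
        rw [hwn] at hj
        rw [getD_inc hj]
        by_cases hji : i = j
        · subst hji; rw [if_pos rfl]; omega
        · rw [if_neg hji]; exact hpin j hj (fun h => hji h.symm)
  -- reduce ncard to a Finset card
  have hset : {v | CoversIn S u v} = (fun i => inc u i) ''
      ↑((Finset.range n).filter (fun i => inc u i ∈ S)) := by
    ext v
    simp only [Set.mem_setOf_eq, hcov, Set.mem_image, Finset.coe_filter,
      Finset.mem_range, Set.mem_setOf_eq]
    constructor
    · rintro ⟨i, ⟨h1, h2⟩, rfl⟩; exact ⟨i, ⟨h1, h2⟩, rfl⟩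
    · rintro ⟨i, ⟨h1, h2⟩, rfl⟩; exact ⟨i, ⟨h1, h2⟩, rfl⟩
  have hinj : Set.InjOn (fun i => inc u i)
      ↑((Finset.range n).filter (fun i => inc u i ∈ S)) := by
    intro a ha b hb hab
    by_contra hne
    have han : a < n := Finset.mem_range.mp (Finset.mem_filter.mp ha).1
    have := congrArg (fun l => l.getD a 0) hab
    simp only at this
    rw [getD_inc (show a < u.length by omega), getD_inc (show a < u.length by omega),
      if_pos rfl, if_neg (Ne.symm hne)] at this
    omega
  rw [hset, Set.ncard_image_of_injOn hinj, Set.ncard_coe_finset]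
  -- rewrite the filter condition
  have hfilter : (Finset.range n).filter (fun i => inc u i ∈ S) =
      (Finset.range n).filter (fun i =>
        u.getD i 0 + 1 ≤ m * i ∧ (i + 1 < n → u.getD i 0 + 1 ≤ u.getD (i+1) 0)) := by
    apply Finset.filter_congr
    intro i hi
    exact hinc_mem i (Finset.mem_range.mp hi)
  rw [hfilter]
  set F := (Finset.range n).filter (fun i =>
    u.getD i 0 + 1 ≤ m * i ∧ (i + 1 < n → u.getD i 0 + 1 ≤ u.getD (i+1) 0)) with hFdef
  have hsub : F ⊆ Finset.Ioo 0 n := by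
    intro i hi
    obtain ⟨h1, h2, _⟩ := Finset.mem_filter.mp hi
    have h1' := Finset.mem_range.mp h1
    rw [Finset.mem_Ioo]
    constructor
    · by_contra h
      have : i = 0 := by omega
      subst this
      simp at h2
    · exact h1'
  have hcardIoo : (Finset.Ioo 0 n).card = n - 1 := by
    rw [Nat.card_Ioo]
    omega
  constructor
  · intro hcard
    have hFeq : F = Finset.Ioo 0 n :=
      Finset.eq_of_subset_of_card_le hsub (by omega)
    have hQ : ∀ i, 0 < i → i < n →
        u.getD i 0 + 1 ≤ m * i ∧ (i + 1 < n → u.getD i 0 + 1 ≤ u.getD (i+1) 0) := by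
      intro i h1 h2
      have : i ∈ F := hFeq ▸ Finset.mem_Ioo.mpr ⟨h1, h2⟩
      exact (Finset.mem_filter.mp this).2
    refine ⟨fun h2 => husorted 0 (by omega), fun i h1 h2 => ?_, fun i h1 h2 => ?_⟩
    · have := (hQ i h1 (by omega)).2 h2; omega
    · have := (hQ i h1 h2).1; omega
  · rintro ⟨_, h2, h3⟩
    have hsub2 : Finset.Ioo 0 n ⊆ F := by
      intro i hi
      rw [Finset.mem_Ioo] at hi
      refine Finset.mem_filter.mpr ⟨Finset.mem_range.mpr hi.2, ?_, fun h => ?_⟩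
      · have := h3 i hi.1 hi.2; omega
      · have := h2 i hi.1 h; omega
    rw [Finset.Subset.antisymm hsub hsub2, hcardIoo]
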